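/- The FEMDA decision rule is scale invariant: writing Δ²ⱼₖ(x) = log[((x-μⱼ)ᵀΣⱼ⁻¹(x-μⱼ))/((x-μₖ)ᵀΣₖ⁻¹(x-μₖ))] and λⱼₖ = log(|Σₖ|/|Σⱼ|), the quantity Δ²ⱼₖ(x) - (1/m)λⱼₖ is unchanged when both Σⱼ and Σₖ are multiplied by the same α > 0, so the truth value of the decision inequality Δ²ⱼₖ(x) ≥ (1/m)λⱼₖ does not change. -/
import Mathlib


open Matrix

/-- The FEMDA decision statistic `Δ²ⱼₖ(x) - (1/m) λⱼₖ` is unchanged when both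
`Sⱼ` and `Sₖ` are multiplied by the same `l > 0`. -/
theorem stmt6 (m : ℕ) (hm : 1 ≤ m) (x μj μk : Fin m → ℝ)
    (hxj : x ≠ μj) (hxk : x ≠ μk)
    (Sj Sk : Matrix (Fin m) (Fin m) ℝ) (hSj : Sj.PosDef) (hSk : Sk.PosDef)
    (l : ℝ) (hl : 0 < l) :
    Real.log (((x - μj) ⬝ᵥ (l • Sj)⁻¹.mulVec (x - μj)) /
        ((x - μk) ⬝ᵥ (l • Sk)⁻¹.mulVec (x - μk))) -
      (1 / (m : ℝ)) * Real.log ((l • Sk).det / (l • Sj).det) =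
    Real.log (((x - μj) ⬝ᵥ Sj⁻¹.mulVec (x - μj)) /
        ((x - μk) ⬝ᵥ Sk⁻¹.mulVec (x - μk))) -
      (1 / (m : ℝ)) * Real.log (Sk.det / Sj.det) := by
  have hl0 : l ≠ 0 := hl.ne'
  have : Invertible l := invertibleOfNonzero hl0
  rw [Matrix.inv_smul (A := Sj) l hSj.det_pos.ne'.isUnit,
    Matrix.inv_smul (A := Sk) l hSk.det_pos.ne'.isUnit]
  have hq : ∀ (S : Matrix (Fin m) (Fin m) ℝ) (v : Fin m → ℝ),
      v ⬝ᵥ (⅟ l • S⁻¹).mulVec v = ⅟ l * (v ⬝ᵥ S⁻¹.mulVec v) := by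
    intro S v
    rw [Matrix.smul_mulVec, dotProduct_smul, smul_eq_mul]
  rw [hq, hq, Matrix.det_smul, Matrix.det_smul,
    mul_div_mul_left _ _ (by rw [invOf_eq_inv]; positivity),
    mul_div_mul_left _ _ (by positivity : (l : ℝ) ^ (Fintype.card (Fin m)) ≠ 0)]
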